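/- arXiv:2012.11724 — 5 statements merged into one kernel-verified Lean document; each statement's English description precedes it below -/
import Mathlib

section
/- Let φ(x,y) = (4-x²+y²)/(4y) and let F(x,y) = (2x²/(4-y²), y + x²y/(4-y²)). Then φ(F(x,y)) = φ(x,y) wherever both sides are defined. That is, φ is a rational first integral for F. -/
/-!
Write `d = 4 - y²` and `s = d + x²`, so that `F(x,y) = (2x²/d, y s/d)`. Since
`4d² - 4x⁴ = 4(d - x²) s`, the numerator of `φ ∘ F` is `s/d²` times a polynomial, which turns
out to be `d (4 - x² + y²)`; the factor `s d` then cancels against the denominator `4 y s / d`.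
-/

noncomputable def F (p : ℝ × ℝ) : ℝ × ℝ :=
  (2 * p.1 ^ 2 / (4 - p.2 ^ 2), p.2 + p.1 ^ 2 * p.2 / (4 - p.2 ^ 2))

noncomputable def phi (p : ℝ × ℝ) : ℝ :=
  (4 - p.1 ^ 2 + p.2 ^ 2) / (4 * p.2)

lemma F_snd_eq (p : ℝ × ℝ) (hd : 4 - p.2 ^ 2 ≠ 0) :
    (F p).2 = p.2 * (4 - p.2 ^ 2 + p.1 ^ 2) / (4 - p.2 ^ 2) := by
  simp only [F]
  field_simp

lemma phi_F_numerator_eq (x y : ℝ) :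
    4 * (4 - y ^ 2) ^ 2 - 4 * x ^ 4 + y ^ 2 * (4 - y ^ 2 + x ^ 2) ^ 2
      = (4 - y ^ 2 + x ^ 2) * (4 - y ^ 2) * (4 - x ^ 2 + y ^ 2) := by
  ring

theorem phi_comp_F (p : ℝ × ℝ) (hd : 4 - p.2 ^ 2 ≠ 0) (hF : (F p).2 ≠ 0) :
    phi (F p) = phi p := by
  obtain ⟨x, y⟩ := p
  have hys : y * (4 - y ^ 2 + x ^ 2) ≠ 0 := by
    rw [F_snd_eq _ hd] at hF
    exact left_ne_zero_of_mul hF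
  have hy : y ≠ 0 := left_ne_zero_of_mul hys
  have hs : 4 - y ^ 2 + x ^ 2 ≠ 0 := right_ne_zero_of_mul hys
  simp only [phi, F_snd_eq _ hd]
  simp only [F]
  field_simp
  linear_combination phi_F_numerator_eq x y

theorem phi_first_integral_F_general (x y : ℝ) (hy : y ^ 2 ≠ 4)
    (hy' : y + x ^ 2 * y / (4 - y ^ 2) ≠ 0) :
    (4 - (2 * x ^ 2 / (4 - y ^ 2)) ^ 2 + (y + x ^ 2 * y / (4 - y ^ 2)) ^ 2)
        / (4 * (y + x ^ 2 * y / (4 - y ^ 2)))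
      = (4 - x ^ 2 + y ^ 2) / (4 * y) :=
  phi_comp_F (x, y) (sub_ne_zero.mpr (Ne.symm hy)) hy'

/-- φ is a rational first integral for F. -/
theorem phi_first_integral_F (x y : ℝ) (hy0 : y ≠ 0) (hy : y ^ 2 ≠ 4)
    (hy' : y + x ^ 2 * y / (4 - y ^ 2) ≠ 0) :
    (4 - (2 * x ^ 2 / (4 - y ^ 2)) ^ 2 + (y + x ^ 2 * y / (4 - y ^ 2)) ^ 2)
        / (4 * (y + x ^ 2 * y / (4 - y ^ 2)))
      = (4 - x ^ 2 + y ^ 2) / (4 * y) :=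
  phi_first_integral_F_general x y hy hy'
end

section
/- For η ∈ ℝ, let 𝓗_η = {(x,y) ∈ ℝ² : 4 - x² + y² - 4ηy = 0} and let F(x,y) = (2x²/(4-y²), y + x²y/(4-y²)). If (x,y) ∈ 𝓗_η with x ≠ 0 and y² ≠ 4, then F(x,y) ∈ 𝓗_η. That is, each vertical hyperbola 𝓗_η is invariant under F. -/
/-!
Write `H_η(x, y) = 4 - x² + y² - 4ηy` and `D = 4 - y²`. The second coordinate of `F` is
`y (1 + x²/D)`, and eliminating `4ηy` shows that `H_η ∘ F = (1 + x²/D) · H_η`: the hyperbola's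
defining polynomial is multiplied by a factor under `F`, so its zero set is invariant.
-/

namespace VerticalHyperbola

noncomputable def F (p : ℝ × ℝ) : ℝ × ℝ :=
  (2 * p.1 ^ 2 / (4 - p.2 ^ 2), p.2 + p.1 ^ 2 * p.2 / (4 - p.2 ^ 2))

def H (η : ℝ) (p : ℝ × ℝ) : ℝ :=
  4 - p.1 ^ 2 + p.2 ^ 2 - 4 * η * p.2

theorem H_F (η x y : ℝ) (hy : 4 - y ^ 2 ≠ 0) :
    H η (F (x, y)) = (1 + x ^ 2 / (4 - y ^ 2)) * H η (x, y) := by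
  simp only [H, F]
  field_simp
  ring

end VerticalHyperbola

theorem vertical_hyperbola_invariant_general (η x y : ℝ)
    (h : 4 - x ^ 2 + y ^ 2 - 4 * η * y = 0) (hy : y ^ 2 ≠ 4) :
    4 - (2 * x ^ 2 / (4 - y ^ 2)) ^ 2 + (y + x ^ 2 * y / (4 - y ^ 2)) ^ 2
      - 4 * η * (y + x ^ 2 * y / (4 - y ^ 2)) = 0 := by
  change VerticalHyperbola.H η (VerticalHyperbola.F (x, y)) = 0
  rw [VerticalHyperbola.H_F η x y (sub_ne_zero.mpr hy.symm)]
  exact mul_eq_zero_of_right _ h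

/-- Each vertical hyperbola 𝓗_η is invariant under F. -/
theorem vertical_hyperbola_invariant (η x y : ℝ)
    (h : 4 - x ^ 2 + y ^ 2 - 4 * η * y = 0) (hx : x ≠ 0) (hy : y ^ 2 ≠ 4) :
    4 - (2 * x ^ 2 / (4 - y ^ 2)) ^ 2 + (y + x ^ 2 * y / (4 - y ^ 2)) ^ 2
      - 4 * η * (y + x ^ 2 * y / (4 - y ^ 2)) = 0 :=
  vertical_hyperbola_invariant_general η x y h hy
end

section
/- Let θ ∈ ℝ and let 𝓕_θ = {(x,y) ∈ ℝ² : 4 + x² - y² - 4θx = 0}. If (x,y) ∈ 𝓕_{θ'} with x ≠ 0, y² ≠ 4, where 2θ'² - 1 = θ, then F(x,y) ∈ 𝓕_θ, where F(x,y) = (2x²/(4-y²), y + x²y/(4-y²)). That is, F maps the horizontal hyperbola with parameter θ' into the one with parameter α(θ') for the Chebyshev map α(z) = 2z² - 1. -/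
/-!
Write `d = 4 - y²` and `s = 4 + x² - y²`. Clearing the denominator `d²`, the equation of the
hyperbola with parameter `2θ² - 1` at `F(x, y)` becomes `d (s² - 16 θ² x²)`, because `4 - y² = d`
collapses `4 s² - y² s²` to `d s²`. This factors as `d (s - 4θx)(s + 4θx)`, and `s - 4θx` is the
equation of the hyperbola with parameter `θ` at `(x, y)`.
-/

variable {K : Type*} [Field K]

def hyperbolaMap (p : K × K) : K × K :=
  (2 * p.1 ^ 2 / (4 - p.2 ^ 2), p.2 + p.1 ^ 2 * p.2 / (4 - p.2 ^ 2))

def horizontalHyperbolaEq (θ : K) (p : K × K) : K :=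
  4 + p.1 ^ 2 - p.2 ^ 2 - 4 * θ * p.1

theorem horizontalHyperbolaEq_hyperbolaMap (θ : K) (p : K × K) (hp : 4 - p.2 ^ 2 ≠ 0) :
    horizontalHyperbolaEq (2 * θ ^ 2 - 1) (hyperbolaMap p) =
      horizontalHyperbolaEq θ p * (4 + p.1 ^ 2 - p.2 ^ 2 + 4 * θ * p.1) / (4 - p.2 ^ 2) := by
  unfold horizontalHyperbolaEq hyperbolaMap
  field_simp
  ring

theorem horizontal_hyperbola_maps_general (θ θ' x y : ℝ)
    (hθ : 2 * θ' ^ 2 - 1 = θ)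
    (h : 4 + x ^ 2 - y ^ 2 - 4 * θ' * x = 0) (hy : y ^ 2 ≠ 4) :
    4 + (2 * x ^ 2 / (4 - y ^ 2)) ^ 2 - (y + x ^ 2 * y / (4 - y ^ 2)) ^ 2
      - 4 * θ * (2 * x ^ 2 / (4 - y ^ 2)) = 0 := by
  have hd : 4 - y ^ 2 ≠ 0 := sub_ne_zero.mpr (Ne.symm hy)
  have hxy : horizontalHyperbolaEq θ' (x, y) = 0 := h
  have key := horizontalHyperbolaEq_hyperbolaMap θ' (x, y) hd
  rw [hθ, hxy, zero_mul, zero_div] at key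
  exact key

/-- F maps the horizontal hyperbola 𝓕_{θ'} into 𝓕_θ with θ = 2θ'² - 1. -/
theorem horizontal_hyperbola_maps (θ θ' x y : ℝ)
    (hθ : 2 * θ' ^ 2 - 1 = θ)
    (h : 4 + x ^ 2 - y ^ 2 - 4 * θ' * x = 0) (hx : x ≠ 0) (hy : y ^ 2 ≠ 4) :
    4 + (2 * x ^ 2 / (4 - y ^ 2)) ^ 2 - (y + x ^ 2 * y / (4 - y ^ 2)) ^ 2
      - 4 * θ * (2 * x ^ 2 / (4 - y ^ 2)) = 0 :=
  horizontal_hyperbola_maps_general θ θ' x y hθ h hy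
end

section
/- The Hanoi map (x,y) ↦ (x - 2(x²-x-y²)y²/((x-y-1)(x²+y-y²-1)), (x+y-1)y²/((x-y-1)(x²+y-y²-1))) is semiconjugated by ψ(x,y) = (x² - 1 - xy - 2y²)/y to the one-dimensional map β(x) = x² - x - 3: if (x',y') is the image of (x,y) under the Hanoi map (with all denominators nonzero), then ψ(x',y') = β(ψ(x,y)). -/
/-!
Write the Hanoi map as (x, y) ↦ (X / D, Y / D) with D = (x - y - 1)(x² + y - y² - 1),
X = x D - 2(x² - x - y²) y² and Y = (x + y - 1) y². Since x² - 1 - xy - 2y² = (x - 2y)(x + y) - 1,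
clearing denominators gives ψ(X / D, Y / D) = ((X - 2Y)(X + Y) - D²) / (D Y), and the
semiconjugacy becomes a polynomial identity whose right-hand side carries the factor x + y - 1 of Y.
-/

theorem hanoi_homogeneous_identity {R : Type*} [CommRing R] (x y D : R)
    (hD : D = (x - y - 1) * (x ^ 2 + y - y ^ 2 - 1)) :
    (x * D - 2 * (x ^ 2 - x - y ^ 2) * y ^ 2 - 2 * ((x + y - 1) * y ^ 2))
        * (x * D - 2 * (x ^ 2 - x - y ^ 2) * y ^ 2 + (x + y - 1) * y ^ 2) - D ^ 2
      = D * (x + y - 1) * ((x ^ 2 - 1 - x * y - 2 * y ^ 2) ^ 2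
          - (x ^ 2 - 1 - x * y - 2 * y ^ 2) * y - 3 * y ^ 2) := by
  subst hD
  ring

theorem hanoi_semiconjugacy_general (x y x' y' : ℝ)
    (hx' : x' = x - 2 * (x ^ 2 - x - y ^ 2) * y ^ 2
        / ((x - y - 1) * (x ^ 2 + y - y ^ 2 - 1)))
    (hy' : y' = (x + y - 1) * y ^ 2
        / ((x - y - 1) * (x ^ 2 + y - y ^ 2 - 1)))
    (hy'0 : y' ≠ 0) :
    (x' ^ 2 - 1 - x' * y' - 2 * y' ^ 2) / y'
      = ((x ^ 2 - 1 - x * y - 2 * y ^ 2) / y) ^ 2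
        - (x ^ 2 - 1 - x * y - 2 * y ^ 2) / y - 3 := by
  set D := (x - y - 1) * (x ^ 2 + y - y ^ 2 - 1) with hD
  obtain ⟨⟨hxy, hy2⟩, hD0⟩ : ((x + y - 1 ≠ 0) ∧ y ^ 2 ≠ 0) ∧ D ≠ 0 := by
    rwa [hy', div_ne_zero_iff, mul_ne_zero_iff] at hy'0
  have hy : y ≠ 0 := pow_ne_zero_iff two_ne_zero |>.mp hy2
  subst hx' hy'
  field_simp
  linear_combination (y ^ 2 * D) * hanoi_homogeneous_identity x y D hD

/-- The Hanoi map is semiconjugated by ψ(x,y) = (x²-1-xy-2y²)/y to β(x) = x²-x-3. -/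
theorem hanoi_semiconjugacy (x y x' y' : ℝ)
    (hy : y ≠ 0)
    (hd1 : x - y - 1 ≠ 0) (hd2 : x ^ 2 + y - y ^ 2 - 1 ≠ 0)
    (hx' : x' = x - 2 * (x ^ 2 - x - y ^ 2) * y ^ 2
        / ((x - y - 1) * (x ^ 2 + y - y ^ 2 - 1)))
    (hy' : y' = (x + y - 1) * y ^ 2
        / ((x - y - 1) * (x ^ 2 + y - y ^ 2 - 1)))
    (hy'0 : y' ≠ 0) :
    (x' ^ 2 - 1 - x' * y' - 2 * y' ^ 2) / y'
      = ((x ^ 2 - 1 - x * y - 2 * y ^ 2) / y) ^ 2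
        - (x ^ 2 - 1 - x * y - 2 * y ^ 2) / y - 3 :=
  hanoi_semiconjugacy_general x y x' y' hx' hy' hy'0
end

section
/- The map F₍α,β₎(x,v) = (αx²/((v+β+α)(v+β-α)), v - (v+β)x²/((v+β+α)(v+β-α))) is conjugate to F(x,y) = (2x²/(4-y²), y + x²y/(4-y²)) by the affine change of variables R(x,v) = (-(2/α)x, -(2/α)v - (2/α)β): i.e., R ∘ F₍α,β₎ = F ∘ R wherever defined (α ≠ 0 and denominators nonzero). -/
noncomputable section

namespace Conjugacy

def F (p : ℝ × ℝ) : ℝ × ℝ :=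
  (2 * p.1 ^ 2 / (4 - p.2 ^ 2), p.2 + p.1 ^ 2 * p.2 / (4 - p.2 ^ 2))

def Fαβ (α β : ℝ) (p : ℝ × ℝ) : ℝ × ℝ :=
  (α * p.1 ^ 2 / ((p.2 + β + α) * (p.2 + β - α)),
    p.2 - (p.2 + β) * p.1 ^ 2 / ((p.2 + β + α) * (p.2 + β - α)))

def R (α β : ℝ) (p : ℝ × ℝ) : ℝ × ℝ :=
  (-(2 / α) * p.1, -(2 / α) * p.2 - (2 / α) * β)

variable {α β : ℝ}

theorem four_sub_sq_R_snd (hα : α ≠ 0) (p : ℝ × ℝ) :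
    4 - (R α β p).2 ^ 2 = -4 * ((p.2 + β + α) * (p.2 + β - α)) / α ^ 2 := by
  simp only [R]
  field_simp
  ring

/-- By `four_sub_sq_R_snd`, both sides hit the junk value `x / 0 = 0` at the same points. -/
theorem R_comp_Fαβ (hα : α ≠ 0) : R α β ∘ Fαβ α β = F ∘ R α β := by
  funext p
  simp only [Function.comp_apply]
  rw [F, four_sub_sq_R_snd hα]
  simp only [R, Fαβ, Prod.mk.injEq]
  constructor <;> field_simp <;> ring

end Conjugacy

end

theorem F_alpha_beta_conjugate_to_F_general (α β x v : ℝ) (hα : α ≠ 0) :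
    (-(2 / α) * (α * x ^ 2 / ((v + β + α) * (v + β - α))),
      -(2 / α) * (v - (v + β) * x ^ 2 / ((v + β + α) * (v + β - α)))
        - (2 / α) * β)
    = (2 * (-(2 / α) * x) ^ 2 / (4 - (-(2 / α) * v - (2 / α) * β) ^ 2),
        (-(2 / α) * v - (2 / α) * β)
          + (-(2 / α) * x) ^ 2 * (-(2 / α) * v - (2 / α) * β)
            / (4 - (-(2 / α) * v - (2 / α) * β) ^ 2)) :=
  congrFun (Conjugacy.R_comp_Fαβ hα) (x, v)

/-- F₍α,β₎ is conjugate to F by the affine change of variables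
R(x,v) = (-(2/α)x, -(2/α)v - (2/α)β): R ∘ F₍α,β₎ = F ∘ R where defined. -/
theorem F_alpha_beta_conjugate_to_F (α β x v : ℝ) (hα : α ≠ 0)
    (hden : (v + β + α) * (v + β - α) ≠ 0)
    (hden' : 4 - (-(2 / α) * v - (2 / α) * β) ^ 2 ≠ 0) :
    (-(2 / α) * (α * x ^ 2 / ((v + β + α) * (v + β - α))),
      -(2 / α) * (v - (v + β) * x ^ 2 / ((v + β + α) * (v + β - α)))
        - (2 / α) * β)
    = (2 * (-(2 / α) * x) ^ 2 / (4 - (-(2 / α) * v - (2 / α) * β) ^ 2),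
        (-(2 / α) * v - (2 / α) * β)
          + (-(2 / α) * x) ^ 2 * (-(2 / α) * v - (2 / α) * β)
            / (4 - (-(2 / α) * v - (2 / α) * β) ^ 2)) :=
  F_alpha_beta_conjugate_to_F_general α β x v hα
end
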